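/- Let f, g ∈ F be given by admissible linear systems 𝒜_f = (u_f, A_f, v_f) and 𝒜_g = (u_g, A_g, v_g), and let 𝒜_f + 𝒜_g = (e₁, [[A_f, −A_f u_fᵀ u_g], [0, A_g]], [v_f; v_g]) and 𝒜_f · 𝒜_g = (e₁, [[A_f, −v_f u_g], [0, A_g]], [0; v_g]) be the ALSs for f + g and f g built from them. Then the K-linear spans of the right families satisfy R(𝒜_f + 𝒜_g) = R(𝒜_f) + R(𝒜_g) (sum of K-subspaces of F), and R(𝒜_f · 𝒜_g) = R(𝒜_f) + f R(𝒜_g), where f R(𝒜_g) = { f w : w ∈ R(𝒜_g) }; in particular R(𝒜_f) ⊆ R(𝒜_f · 𝒜_g). -/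

import Mathlib

/-!
Both system matrices are block upper triangular, `[[A_f, C], [0, A_g]]`, so their inverse is
`[[A_f⁻¹, Y], [0, A_g⁻¹]]` for any `Y` with `A_f Y + C A_g⁻¹ = 0`, and the right family (the first
row of the inverse) is the right family of `𝒜_f` followed by the first row of `Y`. For the sum
`Y = E₁₁ A_g⁻¹`, whose first row is the right family of `𝒜_g`; for the product
`Y = A_f⁻¹ v_f e₁ A_g⁻¹`, whose first row is `(A_f⁻¹ v_f)₁ = f` times the right family of `𝒜_g`.
-/

open Matrix

/-- The row vector `e₁ = (1,0,…,0)`. -/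
def e1Row (F : Type*) [Semiring F] (n : ℕ) [NeZero n] : Matrix (Fin 1) (Fin n) F :=
  Matrix.of fun _ j => if j = 0 then 1 else 0

section RowSpan

variable {K M : Type*} [Field K] [AddCommGroup M] [Module K M]

theorem Submodule.span_range_sumElim {ι κ : Type*} (u : ι → M) (w : κ → M) :
    Submodule.span K (Set.range (Sum.elim u w))
      = Submodule.span K (Set.range u) ⊔ Submodule.span K (Set.range w) := by
  rw [Set.Sum.elim_range, Submodule.span_union]

theorem Matrix.span_range_fromBlocks_inl {l m n o : Type*}
    (A : Matrix n l M) (B : Matrix n m M) (C : Matrix o l M) (D : Matrix o m M) (i : n) :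
    Submodule.span K (Set.range fun q => fromBlocks A B C D (Sum.inl i) q)
      = Submodule.span K (Set.range (A i)) ⊔ Submodule.span K (Set.range (B i)) := by
  have hrow : (fun q => fromBlocks A B C D (Sum.inl i) q) = Sum.elim (A i) (B i) := by
    funext q
    cases q <;> rfl
  rw [hrow, Submodule.span_range_sumElim]

end RowSpan

theorem Submodule.map_mulLeft_span_range {K F ι : Type*} [Field K] [Ring F] [Algebra K F]
    (a : F) (w : ι → F) :
    Submodule.map (LinearMap.mulLeft K a) (Submodule.span K (Set.range w))
      = Submodule.span K (Set.range fun i => a * w i) := by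
  rw [Submodule.map_span, ← Set.range_comp]
  rfl

theorem Matrix.fromBlocks_zero₂₁_mul_fromBlocks_zero₂₁_eq_one {m n R : Type*}
    [Fintype m] [Fintype n] [DecidableEq m] [DecidableEq n] [Ring R]
    {A B : Matrix m m R} {D E : Matrix n n R} {C Y : Matrix m n R}
    (hAB : A * B = 1) (hDE : D * E = 1) (hY : A * Y + C * E = 0) :
    fromBlocks A C 0 D * fromBlocks B Y 0 E = 1 := by
  rw [fromBlocks_multiply, hAB, hDE, hY, ← fromBlocks_one]
  simp

section FirstRow

variable {F : Type*} [Semiring F]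

theorem e1Row_mul_apply {n m : ℕ} [NeZero n] (M : Matrix (Fin n) (Fin m) F) (j : Fin m) :
    (e1Row F n * M) 0 j = M 0 j := by
  simp [e1Row, mul_apply, ite_mul]

theorem mul_e1Row_mul_apply {ι : Type*} {n m : ℕ} [NeZero n] (c : Matrix ι (Fin 1) F)
    (M : Matrix (Fin n) (Fin m) F) (i : ι) (j : Fin m) :
    (c * (e1Row F n * M)) i j = c i 0 * M 0 j := by
  rw [mul_apply, Fin.sum_univ_one, e1Row_mul_apply]

end FirstRow

theorem right_family_spans_general {K F : Type*} [Field K] [DivisionRing F] [Algebra K F]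
    {nf ng : ℕ} [NeZero nf] [NeZero ng]
    (f : F)
    (Af Bf : Matrix (Fin nf) (Fin nf) F) (vf : Matrix (Fin nf) (Fin 1) K)
    (Ag Bg : Matrix (Fin ng) (Fin ng) F)
    (hAf : Af * Bf = 1)
    (hAg : Ag * Bg = 1)
    (hf : f = (e1Row F nf * Bf * vf.map (algebraMap K F)) 0 0)
    (Asum Bsum : Matrix (Fin nf ⊕ Fin ng) (Fin nf ⊕ Fin ng) F)
    (hAsum : Asum = fromBlocks Af
      (-(Af * Matrix.single (0 : Fin nf) (0 : Fin ng) (1 : F))) 0 Ag)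
    (hBsum' : Bsum * Asum = 1)
    (Aprod Bprod : Matrix (Fin nf ⊕ Fin ng) (Fin nf ⊕ Fin ng) F)
    (hAprod : Aprod = fromBlocks Af (-(vf.map (algebraMap K F) * e1Row F ng)) 0 Ag)
    (hBprod' : Bprod * Aprod = 1) :
    (Submodule.span K (Set.range fun q => Bsum (Sum.inl 0) q)
      = Submodule.span K (Set.range fun q => Bf 0 q)
        ⊔ Submodule.span K (Set.range fun q => Bg 0 q)) ∧
    (Submodule.span K (Set.range fun q => Bprod (Sum.inl 0) q)
      = Submodule.span K (Set.range fun q => Bf 0 q)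
        ⊔ Submodule.map (LinearMap.mulLeft K f)
            (Submodule.span K (Set.range fun q => Bg 0 q))) ∧
    (Submodule.span K (Set.range fun q => Bf 0 q)
      ≤ Submodule.span K (Set.range fun q => Bprod (Sum.inl 0) q)) := by
  set E := Matrix.single (0 : Fin nf) (0 : Fin ng) (1 : F)
  set v := vf.map (algebraMap K F)
  have hBsum : Bsum = fromBlocks Bf (E * Bg) 0 Bg := by
    refine left_inv_eq_right_inv hBsum' (hAsum ▸ ?_)
    refine fromBlocks_zero₂₁_mul_fromBlocks_zero₂₁_eq_one hAf hAg ?_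
    rw [Matrix.neg_mul, Matrix.mul_assoc, add_neg_cancel]
  have hBprod : Bprod = fromBlocks Bf (Bf * v * (e1Row F ng * Bg)) 0 Bg := by
    refine left_inv_eq_right_inv hBprod' (hAprod ▸ ?_)
    refine fromBlocks_zero₂₁_mul_fromBlocks_zero₂₁_eq_one hAf hAg ?_
    rw [← Matrix.mul_assoc Af, ← Matrix.mul_assoc Af, hAf, Matrix.one_mul, Matrix.neg_mul,
      Matrix.mul_assoc, add_neg_cancel]
  have hsumRow : (E * Bg) 0 = Bg 0 := funext fun q => by
    simp only [E, single_mul_apply_same, one_mul]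
  have hprodRow : (Bf * v * (e1Row F ng * Bg)) 0 = fun q => f * Bg 0 q := funext fun q => by
    rw [mul_e1Row_mul_apply, hf, Matrix.mul_assoc, e1Row_mul_apply]
  have hprodSpan : Submodule.span K (Set.range fun q => Bprod (Sum.inl 0) q)
      = Submodule.span K (Set.range fun q => Bf 0 q)
        ⊔ Submodule.map (LinearMap.mulLeft K f)
            (Submodule.span K (Set.range fun q => Bg 0 q)) := by
    rw [hBprod, span_range_fromBlocks_inl, hprodRow, Submodule.map_mulLeft_span_range]
  refine ⟨?_, hprodSpan, hprodSpan ▸ le_sup_left⟩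
  rw [hBsum, span_range_fromBlocks_inl, hsumRow]

/-- Spans of right families under the rational operations: for the sum ALS one has
`R(𝒜_f + 𝒜_g) = R(𝒜_f) + R(𝒜_g)`, and for the product ALS
`R(𝒜_f · 𝒜_g) = R(𝒜_f) + f·R(𝒜_g)`; in particular `R(𝒜_f) ⊆ R(𝒜_f · 𝒜_g)`. -/
theorem right_family_spans {K F : Type*} [Field K] [DivisionRing F] [Algebra K F]
    {nf ng : ℕ} [NeZero nf] [NeZero ng]
    (f g : F)
    (Af Bf : Matrix (Fin nf) (Fin nf) F) (vf : Matrix (Fin nf) (Fin 1) K)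
    (Ag Bg : Matrix (Fin ng) (Fin ng) F) (vg : Matrix (Fin ng) (Fin 1) K)
    (hAf : Af * Bf = 1) (hAf' : Bf * Af = 1)
    (hAg : Ag * Bg = 1) (hAg' : Bg * Ag = 1)
    (hf : f = (e1Row F nf * Bf * vf.map (algebraMap K F)) 0 0)
    (hg : g = (e1Row F ng * Bg * vg.map (algebraMap K F)) 0 0)
    (Asum Bsum : Matrix (Fin nf ⊕ Fin ng) (Fin nf ⊕ Fin ng) F)
    (hAsum : Asum = fromBlocks Af
      (-(Af * Matrix.single (0 : Fin nf) (0 : Fin ng) (1 : F))) 0 Ag)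
    (hBsum : Asum * Bsum = 1) (hBsum' : Bsum * Asum = 1)
    (Aprod Bprod : Matrix (Fin nf ⊕ Fin ng) (Fin nf ⊕ Fin ng) F)
    (hAprod : Aprod = fromBlocks Af (-(vf.map (algebraMap K F) * e1Row F ng)) 0 Ag)
    (hBprod : Aprod * Bprod = 1) (hBprod' : Bprod * Aprod = 1) :
    (Submodule.span K (Set.range fun q => Bsum (Sum.inl 0) q)
      = Submodule.span K (Set.range fun q => Bf 0 q)
        ⊔ Submodule.span K (Set.range fun q => Bg 0 q)) ∧
    (Submodule.span K (Set.range fun q => Bprod (Sum.inl 0) q)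
      = Submodule.span K (Set.range fun q => Bf 0 q)
        ⊔ Submodule.map (LinearMap.mulLeft K f)
            (Submodule.span K (Set.range fun q => Bg 0 q))) ∧
    (Submodule.span K (Set.range fun q => Bf 0 q)
      ≤ Submodule.span K (Set.range fun q => Bprod (Sum.inl 0) q)) :=
  right_family_spans_general f Af Bf vf Ag Bg hAf hAg hf Asum Bsum hAsum hBsum' Aprod Bprod hAprod
    hBprod'
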